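/- For finitely supported probability distributions p and q on a finite type, the squared total variation distance D_TV(p‖q)^2 = ((1/2)·Σᵢ |pᵢ - qᵢ|)^2 is at most the KL divergence D_KL(p‖q) = Σᵢ pᵢ·log(pᵢ/qᵢ), provided q has full support. -/

import Mathlib

open Real InformationTheory Finset

/-!
Pointwise, `(a - b)² / (2 max a b) ≤ a log (a / b) - a + b`: after scaling by the larger of
`a` and `b`, this is a second-order Taylor bound for `x log x + 1 - x` or `x - 1 - log x` on
`(0, 1]`, proved by monotonicity. Summed over `i`, the right-hand side is the KL divergence
because `∑ p = ∑ q`, and Sedrakyan's form of Cauchy–Schwarz with the weights `2 max (p i) (q i)`,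
whose total lies in `[2, 4]`, bounds `(∑ |p i - q i|)² / 4` by the left-hand side.
-/

lemma sq_sub_one_div_two_le_klFun {t : ℝ} (h0 : 0 ≤ t) (h1 : t ≤ 1) :
    (t - 1) ^ 2 / 2 ≤ klFun t := by
  have hanti : AntitoneOn (fun x ↦ klFun x - (x - 1) ^ 2 / 2) (Set.Icc 0 1) := by
    refine antitoneOn_of_hasDerivWithinAt_nonpos (convex_Icc 0 1) (by fun_prop)
      (f' := fun x ↦ log x - (x - 1)) (fun x hx ↦ ?_) (fun x hx ↦ ?_)
    all_goals rw [interior_Icc] at hx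
    · refine HasDerivAt.hasDerivWithinAt ?_
      refine ((hasDerivAt_klFun hx.1.ne').sub
        (((hasDerivAt_id' x).sub_const 1).pow 2 |>.div_const 2)).congr_deriv ?_
      ring
    · linarith [log_le_sub_one_of_pos hx.1]
  simpa [klFun_one] using hanti ⟨h0, h1⟩ ⟨zero_le_one, le_rfl⟩ h1

lemma sq_one_sub_div_two_le_sub_one_sub_log {s : ℝ} (h0 : 0 < s) (h1 : s ≤ 1) :
    (1 - s) ^ 2 / 2 ≤ s - 1 - log s := by
  have hanti : AntitoneOn (fun x ↦ x - 1 - log x - (1 - x) ^ 2 / 2) (Set.Ioc 0 1) := by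
    refine antitoneOn_of_hasDerivWithinAt_nonpos (convex_Ioc 0 1)
      (fun x hx ↦ by have := hx.1.ne'; fun_prop)
      (f' := fun x ↦ -(1 - x) ^ 2 / x) (fun x hx ↦ ?_) (fun x hx ↦ ?_)
    all_goals rw [interior_Ioc] at hx
    · refine HasDerivAt.hasDerivWithinAt ?_
      refine ((((hasDerivAt_id' x).sub_const 1).sub (hasDerivAt_log hx.1.ne')).sub
        (((hasDerivAt_id' x).const_sub 1).pow 2 |>.div_const 2)).congr_deriv ?_
      field_simp [hx.1.ne']
      ring
    · exact div_nonpos_of_nonpos_of_nonneg (by nlinarith) hx.1.le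
  simpa using hanti ⟨h0, h1⟩ ⟨one_pos, le_rfl⟩ h1

lemma sq_sub_div_two_max_le_mul_log_div {a b : ℝ} (ha : 0 ≤ a) (hb : 0 < b) :
    (a - b) ^ 2 / (2 * max a b) ≤ a * log (a / b) - a + b := by
  rcases le_total a b with hab | hba
  · have := hb.ne'
    calc (a - b) ^ 2 / (2 * max a b) = b * ((a / b - 1) ^ 2 / 2) := by
          rw [max_eq_right hab]; field_simp
      _ ≤ b * klFun (a / b) := mul_le_mul_of_nonneg_left
          (sq_sub_one_div_two_le_klFun (div_nonneg ha hb.le) ((div_le_one hb).2 hab)) hb.le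
      _ = a * log (a / b) - a + b := by rw [klFun_apply]; field_simp; ring
  · have ha' : 0 < a := hb.trans_le hba
    have := ha'.ne'
    calc (a - b) ^ 2 / (2 * max a b) = a * ((1 - b / a) ^ 2 / 2) := by
          rw [max_eq_left hba]; field_simp
      _ ≤ a * (b / a - 1 - log (b / a)) := mul_le_mul_of_nonneg_left
          (sq_one_sub_div_two_le_sub_one_sub_log (div_pos hb ha') ((div_le_one ha').2 hba)) ha'.le
      _ = a * log (a / b) - a + b := by rw [← inv_div, log_inv]; field_simp; ring

theorem tv_sq_le_kl {I : Type*} [Fintype I] (p q : I → ℝ)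
    (hp0 : ∀ i, 0 ≤ p i) (hq0 : ∀ i, 0 < q i)
    (hp1 : ∑ i, p i = 1) (hq1 : ∑ i, q i = 1) :
    ((1 / 2) * ∑ i, |p i - q i|) ^ 2 ≤ ∑ i, p i * Real.log (p i / q i) := by
  set m : I → ℝ := fun i ↦ 2 * max (p i) (q i)
  have hm_pos : ∀ i ∈ univ, 0 < m i := fun i _ ↦ mul_pos two_pos (lt_max_of_lt_right (hq0 i))
  have hm_sum_pos : 0 < ∑ i, m i :=
    calc (0 : ℝ) < ∑ i, 2 * q i := by rw [← mul_sum, hq1]; norm_num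
      _ ≤ ∑ i, m i := sum_le_sum fun i _ ↦ by simp [m]
  have hm_sum_le : ∑ i, m i ≤ 4 :=
    calc ∑ i, m i ≤ ∑ i, 2 * (p i + q i) :=
          sum_le_sum fun i _ ↦ by simp [m, hp0 i, (hq0 i).le]
      _ = 4 := by rw [← mul_sum, sum_add_distrib, hp1, hq1]; norm_num
  calc ((1 / 2) * ∑ i, |p i - q i|) ^ 2 = (∑ i, |p i - q i|) ^ 2 / 4 := by ring
    _ ≤ (∑ i, |p i - q i|) ^ 2 / ∑ i, m i :=
        div_le_div_of_nonneg_left (sq_nonneg _) hm_sum_pos hm_sum_le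
    _ ≤ ∑ i, |p i - q i| ^ 2 / m i := sq_sum_div_le_sum_sq_div univ _ hm_pos
    _ ≤ ∑ i, (p i * log (p i / q i) - p i + q i) := sum_le_sum fun i _ ↦ by
        rw [sq_abs]; exact sq_sub_div_two_max_le_mul_log_div (hp0 i) (hq0 i)
    _ = ∑ i, p i * log (p i / q i) := by
        rw [sum_add_distrib, sum_sub_distrib, hp1, hq1, sub_add_cancel]
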